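/- Key counting lemma behind the nonexpressibility of pair-counting in FOC2's naive disjunction-free form: if m_i (1 ≤ i < n) is the number of nodes a that have exactly i partners b with φ(a,b), and m_n is the number of nodes a with at least n such partners, then the number of ordered pairs (a,b) satisfying φ is at least n if and only if Σ_{i=1}^n i·m_i ≥ n. Moreover, for any sequence (m_1,…,m_n) with Σ_{i=1}^n i·m_i ≥ n there exists a sequence (k_1,…,k_n) with k_i ≤ m_i for all i and n ≤ Σ_{i=1}^n i·k_i ≤ 2n. -/
import Mathlib

lemma stmt4_aux (n : ℕ) (hn : 1 ≤ n) (S : ℕ) :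
    ∀ m' : ℕ → ℕ, ∑ i ∈ Finset.Icc 1 n, i * m' i = S → n ≤ S →
      ∃ k : ℕ → ℕ, (∀ i, k i ≤ m' i) ∧
        n ≤ ∑ i ∈ Finset.Icc 1 n, i * k i ∧
        ∑ i ∈ Finset.Icc 1 n, i * k i ≤ 2 * n := by
  induction S using Nat.strong_induction_on with
  | _ S ih =>
    intro m' hS hnS
    by_cases h2 : S ≤ 2 * n
    · exact ⟨m', fun i => le_refl _, by rw [hS]; exact hnS, by rw [hS]; exact h2⟩
    · have hex : ∃ i ∈ Finset.Icc 1 n, 0 < m' i := by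
        by_contra h
        push_neg at h
        have hz : S = 0 := by
          rw [← hS]
          apply Finset.sum_eq_zero
          intro i hi
          have := Nat.le_zero.mp (h i hi)
          simp [this]
        omega
      obtain ⟨i, hi, hmi⟩ := hex
      have hi1 : 1 ≤ i := (Finset.mem_Icc.mp hi).1
      have hin : i ≤ n := (Finset.mem_Icc.mp hi).2
      set m'' := Function.update m' i (m' i - 1) with hm''
      have hpt : ∀ j, m'' j ≤ m' j := by
        intro j
        by_cases hj : j = i
        · subst hj; simp [hm'']
        · simp [hm'', Function.update_of_ne hj]
      have hsum : ∑ j ∈ Finset.Icc 1 n, j * m'' j = S - i := by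
        have heq : ∀ j ∈ Finset.Icc 1 n, j * m' j = j * m'' j + (if j = i then i else 0) := by
          intro j hj
          by_cases hji : j = i
          · subst hji
            simp only [hm'', Function.update_self, if_pos rfl]
            have : m' j - 1 + 1 = m' j := Nat.succ_pred_eq_of_pos hmi
            calc j * m' j = j * (m' j - 1 + 1) := by rw [this]
              _ = j * (m' j - 1) + j := by ring
          · simp [hm'', Function.update_of_ne hji, hji]
        have : S = ∑ j ∈ Finset.Icc 1 n, (j * m'' j + (if j = i then i else 0)) := by
          rw [← hS]; exact Finset.sum_congr rfl heq
        rw [Finset.sum_add_distrib, Finset.sum_ite_eq' _ i, if_pos hi] at this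
        omega
      have hlt : S - i < S := by omega
      have hni : n ≤ S - i := by omega
      obtain ⟨k, hk1, hk2, hk3⟩ := ih (S - i) hlt m'' hsum hni
      exact ⟨k, fun j => le_trans (hk1 j) (hpt j), hk2, hk3⟩

/-- Counting lemma: with `m i` the number of nodes with exactly `i` partners (for `i < n`)
and `m n` the number of nodes with at least `n` partners, the number of ordered pairs
satisfying `φ` is at least `n` iff `Σ_{i=1}^n i·m i ≥ n`; moreover any sequence `m'` with
`Σ i·m' i ≥ n` dominates a sequence `k` with `n ≤ Σ i·k i ≤ 2n`. -/
theorem stmt4 {V : Type} [Fintype V] [DecidableEq V]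
    (φ : V → V → Prop) [DecidableRel φ] (n : ℕ) (hn : 1 ≤ n)
    (deg : V → ℕ)
    (hdeg : ∀ a, deg a = (Finset.univ.filter (fun b => φ a b)).card)
    (m : ℕ → ℕ)
    (hm : ∀ i, 1 ≤ i → i < n → m i = (Finset.univ.filter (fun a => deg a = i)).card)
    (hmn : m n = (Finset.univ.filter (fun a => n ≤ deg a)).card) :
    ((n ≤ ∑ a : V, deg a) ↔ n ≤ ∑ i ∈ Finset.Icc 1 n, i * m i) ∧
    (∀ m' : ℕ → ℕ, n ≤ ∑ i ∈ Finset.Icc 1 n, i * m' i →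
      ∃ k : ℕ → ℕ, (∀ i, k i ≤ m' i) ∧
        n ≤ ∑ i ∈ Finset.Icc 1 n, i * k i ∧
        ∑ i ∈ Finset.Icc 1 n, i * k i ≤ 2 * n) := by
  constructor
  · -- Σ_{i=1}^n i * m i = Σ_a min (deg a) n
    have key : ∑ i ∈ Finset.Icc 1 n, i * m i = ∑ a : V, min (deg a) n := by
      have h1 : ∑ a : V, min (deg a) n
          = ∑ i ∈ Finset.range (n+1),
              ∑ a ∈ Finset.univ.filter (fun a => min (deg a) n = i), min (deg a) n := by
        rw [Finset.sum_fiberwise_of_maps_to]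
        intro a _
        simp [Nat.lt_succ_iff]
      have h2 : ∀ i ∈ Finset.range (n+1),
          ∑ a ∈ Finset.univ.filter (fun a => min (deg a) n = i), min (deg a) n
            = i * (Finset.univ.filter (fun a => min (deg a) n = i)).card := by
        intro i _
        rw [Finset.sum_congr rfl (fun a ha => (Finset.mem_filter.mp ha).2)]
        simp [mul_comm]
      rw [h1, Finset.sum_congr rfl h2]
      have h3 : Finset.Icc 1 n ⊆ Finset.range (n+1) := by
        intro x hx
        simp only [Finset.mem_Icc] at hx
        simp [Nat.lt_succ_iff, hx.2]
      rw [← Finset.sum_subset h3 (by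
        intro x hx hx2
        have : x = 0 := by
          simp only [Finset.mem_range] at hx
          simp only [Finset.mem_Icc, not_and] at hx2
          omega
        simp [this])]
      apply Finset.sum_congr rfl
      intro i hi
      simp only [Finset.mem_Icc] at hi
      by_cases hin : i < n
      · rw [hm i hi.1 hin]
        congr 2
        apply Finset.filter_congr
        intro a _
        omega
      · have : i = n := by omega
        subst this
        rw [hmn]
        congr 2
        apply Finset.filter_congr
        intro a _
        omega
    rw [key]
    constructor
    · intro h
      by_cases hx : ∃ a : V, n ≤ deg a
      · obtain ⟨a, ha⟩ := hx
        calc n = min (deg a) n := by omega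
          _ ≤ ∑ a : V, min (deg a) n :=
            Finset.single_le_sum (f := fun a => min (deg a) n) (fun _ _ => Nat.zero_le _) (Finset.mem_univ a)
      · push_neg at hx
        have : ∑ a : V, min (deg a) n = ∑ a : V, deg a := by
          apply Finset.sum_congr rfl
          intro a _
          have := hx a
          omega
        rw [this]; exact h
    · intro h
      exact le_trans h (Finset.sum_le_sum (fun a _ => min_le_left _ _))
  · intro m' hm'
    exact stmt4_aux n hn _ m' rfl hm'
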